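/- arXiv:1502.04923 — 4 statements merged into one kernel-verified Lean document; each statement's English description precedes it below -/
import Mathlib

section
/- Let a, b be integers with 4a³ + 27b² ≠ 0 and (x_t, y_t) an integer point on y² = x³ + ax + b. Define the height of the curve by H = max{2¹²·3⁴·|a|³, 2¹⁴·3¹²·b²} and the height of a binary quartic Q by H(Q) = max{2⁶·3⁴·|J₂(Q)|³, 2¹⁰·3¹²·J₃(Q)²}. Then for Q(u,v) = u⁴ - 6x_t u²v² - 8y_t uv³ - (3x_t² + 4a)v⁴ one has H(Q) = H. -/
/-! The invariants of the descent quartic are `J₂ = -4a` and `J₃ = 4(y² - x³ - ax)`, which is `4b`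
on the curve; the two heights then agree term by term, since `2⁶·|4a|³ = 2¹²·|a|³` and
`2¹⁰·(4b)² = 2¹⁴·b²`. -/

noncomputable def J2 (c₀ c₁ c₂ c₃ c₄ : ℚ) : ℚ :=
  c₂ ^ 2 / 12 - c₁ * c₃ / 4 + c₀ * c₄

noncomputable def J3 (c₀ c₁ c₂ c₃ c₄ : ℚ) : ℚ :=
  c₂ ^ 3 / 216 - c₁ * c₂ * c₃ / 48 + c₀ * c₃ ^ 2 / 16 + c₁ ^ 2 * c₄ / 16 - c₀ * c₂ * c₄ / 6

lemma J2_descentQuartic (a x y : ℚ) :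
    J2 1 0 (-6 * x) (-8 * y) (-(3 * x ^ 2 + 4 * a)) = -4 * a := by
  unfold J2; ring

lemma J3_descentQuartic (a x y : ℚ) :
    J3 1 0 (-6 * x) (-8 * y) (-(3 * x ^ 2 + 4 * a)) = 4 * (y ^ 2 - x ^ 3 - a * x) := by
  unfold J3; ring

lemma quarticHeight_neg_four_mul_four_mul (a b : ℚ) :
    max (2 ^ 6 * 3 ^ 4 * |-4 * a| ^ 3) (2 ^ 10 * 3 ^ 12 * (4 * b) ^ 2)
      = max (2 ^ 12 * 3 ^ 4 * |a| ^ 3) (2 ^ 14 * 3 ^ 12 * b ^ 2) := by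
  have h : |-4 * a| = 4 * |a| := by rw [abs_mul]; norm_num
  rw [h]
  congr 1 <;> ring

theorem stmt6_general (a b xt yt : ℤ)
    (ht : yt ^ 2 = xt ^ 3 + a * xt + b) :
    letI j2 : ℚ := J2 1 0 (-6 * (xt : ℚ)) (-8 * (yt : ℚ)) (-(3 * (xt : ℚ) ^ 2 + 4 * (a : ℚ)))
    letI j3 : ℚ := J3 1 0 (-6 * (xt : ℚ)) (-8 * (yt : ℚ)) (-(3 * (xt : ℚ) ^ 2 + 4 * (a : ℚ)))
    max (2 ^ 6 * 3 ^ 4 * |j2| ^ 3) (2 ^ 10 * 3 ^ 12 * j3 ^ 2)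
      = max (2 ^ 12 * 3 ^ 4 * |(a : ℚ)| ^ 3) (2 ^ 14 * 3 ^ 12 * (b : ℚ) ^ 2) := by
  have hb : (yt : ℚ) ^ 2 - (xt : ℚ) ^ 3 - a * xt = b := by
    rw [sub_sub, sub_eq_iff_eq_add']; exact_mod_cast ht
  simp only [J2_descentQuartic, J3_descentQuartic, hb]
  exact quarticHeight_neg_four_mul_four_mul a b

/-- the descent map preserves heights: `H(Q) = H(Y_{a,b})` for the quartic
`Q = u⁴ - 6x_t u²v² - 8y_t uv³ - (3x_t² + 4a)v⁴` associated to an integral point. -/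
theorem stmt6 (a b xt yt : ℤ) (hns : 4 * a ^ 3 + 27 * b ^ 2 ≠ 0)
    (ht : yt ^ 2 = xt ^ 3 + a * xt + b) :
    letI j2 : ℚ := J2 1 0 (-6 * (xt : ℚ)) (-8 * (yt : ℚ)) (-(3 * (xt : ℚ) ^ 2 + 4 * (a : ℚ)))
    letI j3 : ℚ := J3 1 0 (-6 * (xt : ℚ)) (-8 * (yt : ℚ)) (-(3 * (xt : ℚ) ^ 2 + 4 * (a : ℚ)))
    max (2 ^ 6 * 3 ^ 4 * |j2| ^ 3) (2 ^ 10 * 3 ^ 12 * j3 ^ 2)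
      = max (2 ^ 12 * 3 ^ 4 * |(a : ℚ)| ^ 3) (2 ^ 14 * 3 ^ 12 * (b : ℚ) ^ 2) :=
  stmt6_general a b xt yt ht
end

section
/- Let B₂, B₃, B₄ be rational numbers such that the quartic u⁴ + B₂u²v² + B₃uv³ + B₄v⁴ has nonzero discriminant. Define x_t = -B₂/6, y_t = -B₃/8, a₄ = -(B₄ + 3x_t²)/4, a₆ = y_t² - x_t³ - a₄x_t. Then (x_t, y_t) satisfies y_t² = x_t³ + a₄x_t + a₆, and the curve y² = x³ + a₄x + a₆ is nonsingular (4a₄³ + 27a₆² ≠ 0). -/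
def quarticDisc {K : Type*} [Field K] (B₂ B₃ B₄ : K) : K :=
  -4 * B₂ ^ 3 * B₃ ^ 2 + 16 * B₂ ^ 4 * B₄ - 27 * B₃ ^ 4
    + 144 * B₂ * B₃ ^ 2 * B₄ - 128 * B₂ ^ 2 * B₄ ^ 2 + 256 * B₄ ^ 3

/- `x³ + a₄x + a₆` is `-R(-4x + B₂/3)/64` for the resolvent cubic
`R(y) = y³ - B₂y² - 4B₄y + 4B₂B₄ - B₃²` of the quartic, which has the same discriminant;
rescaling the roots by `-1/4` divides it by `4⁶`. -/
theorem descent_discriminant {K : Type*} [Field K] [CharZero K] (B₂ B₃ B₄ : K) :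
    let xt : K := -B₂ / 6
    let yt : K := -B₃ / 8
    let a₄ : K := -(B₄ + 3 * xt ^ 2) / 4
    let a₆ : K := yt ^ 2 - xt ^ 3 - a₄ * xt
    4096 * (4 * a₄ ^ 3 + 27 * a₆ ^ 2) = -quarticDisc B₂ B₃ B₄ := by
  intro xt yt a₄ a₆
  simp only [a₆, a₄, xt, yt, quarticDisc]
  ring

/-- if the quartic `u⁴ + B₂u²v² + B₃uv³ + B₄v⁴` has nonzero discriminant,
then the descent construction yields a point `(x_t, y_t)` on a nonsingular curve
`y² = x³ + a₄x + a₆`. -/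
theorem stmt8 (B₂ B₃ B₄ : ℚ)
    (hdisc : -4 * B₂ ^ 3 * B₃ ^ 2 + 16 * B₂ ^ 4 * B₄ - 27 * B₃ ^ 4
      + 144 * B₂ * B₃ ^ 2 * B₄ - 128 * B₂ ^ 2 * B₄ ^ 2 + 256 * B₄ ^ 3 ≠ 0) :
    letI xt : ℚ := -B₂ / 6
    letI yt : ℚ := -B₃ / 8
    letI a₄ : ℚ := -(B₄ + 3 * xt ^ 2) / 4
    letI a₆ : ℚ := yt ^ 2 - xt ^ 3 - a₄ * xt
    yt ^ 2 = xt ^ 3 + a₄ * xt + a₆ ∧ 4 * a₄ ^ 3 + 27 * a₆ ^ 2 ≠ 0 := by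
  refine ⟨by ring, fun h => hdisc ?_⟩
  have hrel := descent_discriminant B₂ B₃ B₄
  simp only [h, mul_zero, zero_eq_neg] at hrel
  exact hrel
end

section
/- Let a, b be integers with 4a³ + 27b² ≠ 0 such that there is no prime p with p⁴ | a and p⁶ | b. Let (x_t, y_t) be an integer solution of y² = x³ + ax + b. Then there is no prime p > 3 such that p² | 6x_t, p³ | 8y_t, and p⁴ | 3x_t² + 4a simultaneously; i.e., the associated quartic u⁴ - 6x_t u²v² - 8y_t uv³ - (3x_t² + 4a)v⁴ is minimal away from {2,3}. -/
/-!
For `p > 3` the constants `6`, `8`, `4` are units at `p`, so the divisibilities say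
`p² ∣ x_t`, `p³ ∣ y_t` and then `p⁴ ∣ a`. Solving the curve equation for `b` expresses it as a
polynomial of weight `6` in `x_t, y_t, a` (weights `2, 3, 4`), so `p⁶ ∣ b`, contradicting minimality.
-/

lemma Int.natCast_not_dvd_two_pow_mul_three_pow {p : ℕ} (hp : p.Prime) (hp3 : 3 < p) (i j : ℕ) :
    ¬ (p : ℤ) ∣ 2 ^ i * 3 ^ j := by
  intro h
  have h' : p ∣ 2 ^ i * 3 ^ j := by exact_mod_cast h
  rcases (Nat.Prime.dvd_mul hp).mp h' with h2 | h3
  · have := Nat.le_of_dvd two_pos (hp.dvd_of_dvd_pow h2)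
    omega
  · have := Nat.le_of_dvd three_pos (hp.dvd_of_dvd_pow h3)
    omega

lemma pow_six_dvd_of_weierstrass_eq {p x y a b : ℤ} (h : y ^ 2 = x ^ 3 + a * x + b)
    (hx : p ^ 2 ∣ x) (hy : p ^ 3 ∣ y) (ha : p ^ 4 ∣ a) : p ^ 6 ∣ b := by
  obtain ⟨x, rfl⟩ := hx
  obtain ⟨y, rfl⟩ := hy
  obtain ⟨a, rfl⟩ := ha
  exact ⟨y ^ 2 - x ^ 3 - a * x, by linear_combination -h⟩

theorem stmt9_general (a b xt yt : ℤ)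
    (hmin : ¬ ∃ p : ℕ, p.Prime ∧ (p : ℤ) ^ 4 ∣ a ∧ (p : ℤ) ^ 6 ∣ b)
    (ht : yt ^ 2 = xt ^ 3 + a * xt + b) :
    ¬ ∃ p : ℕ, p.Prime ∧ 3 < p ∧ (p : ℤ) ^ 2 ∣ 6 * xt ∧ (p : ℤ) ^ 3 ∣ 8 * yt ∧
      (p : ℤ) ^ 4 ∣ 3 * xt ^ 2 + 4 * a := by
  rintro ⟨p, hp, hp3, h6x, h8y, h4a⟩
  have hpZ : Prime (p : ℤ) := Nat.prime_iff_prime_int.mp hp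
  have hx : (p : ℤ) ^ 2 ∣ xt :=
    hpZ.pow_dvd_of_dvd_mul_left 2 (Int.natCast_not_dvd_two_pow_mul_three_pow hp hp3 1 1) h6x
  have hy : (p : ℤ) ^ 3 ∣ yt :=
    hpZ.pow_dvd_of_dvd_mul_left 3 (Int.natCast_not_dvd_two_pow_mul_three_pow hp hp3 3 0) h8y
  have ha : (p : ℤ) ^ 4 ∣ a := by
    have hx2 : (p : ℤ) ^ 4 ∣ 3 * xt ^ 2 := by
      obtain ⟨x, rfl⟩ := hx
      exact ⟨3 * x ^ 2, by ring⟩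
    exact hpZ.pow_dvd_of_dvd_mul_left 4 (Int.natCast_not_dvd_two_pow_mul_three_pow hp hp3 2 0)
      ((dvd_add_right hx2).mp h4a)
  exact hmin ⟨p, hp, ha, pow_six_dvd_of_weierstrass_eq ht hx hy ha⟩

/-- if `y² = x³ + ax + b` is minimal (no prime `p` with `p⁴ ∣ a` and `p⁶ ∣ b`)
and nonsingular, then for any integral point `(x_t, y_t)` the associated quartic
`u⁴ - 6x_t u²v² - 8y_t uv³ - (3x_t² + 4a)v⁴` is minimal away from `{2,3}`. -/
theorem stmt9 (a b xt yt : ℤ) (hns : 4 * a ^ 3 + 27 * b ^ 2 ≠ 0)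
    (hmin : ¬ ∃ p : ℕ, p.Prime ∧ (p : ℤ) ^ 4 ∣ a ∧ (p : ℤ) ^ 6 ∣ b)
    (ht : yt ^ 2 = xt ^ 3 + a * xt + b) :
    ¬ ∃ p : ℕ, p.Prime ∧ 3 < p ∧ (p : ℤ) ^ 2 ∣ 6 * xt ∧ (p : ℤ) ^ 3 ∣ 8 * yt ∧
      (p : ℤ) ^ 4 ∣ 3 * xt ^ 2 + 4 * a :=
  stmt9_general a b xt yt hmin ht
end

section
/- Let a, a', b, b' be integers and let (x_t, y_t), (x_{t'}, y_{t'}) be integer points on y² = x³ + ax + b and y² = x³ + a'x + b' respectively. Suppose g ∈ GL₂(ℤ) fixes the vector (1,0) and transforms the quartic Q = u⁴ - 6x_t u²v² - 8y_t uv³ - (3x_t² + 4a)v⁴ into Q' = u⁴ - 6x_{t'} u²v² - 8y_{t'} uv³ - (3x_{t'}² + 4a')v⁴ (under linear change of variables). Then a = a', b = b', x_t = x_{t'}, and y_t = ±y_{t'}. -/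
/-!
Fixing `(1, 0)` forces `g = [[1, p], [0, e]]` with `e = ±1`, since `det g = e` is a unit of `ℤ`.
The quartics have no `u³v` term, while the shear `u ↦ u + p v` creates one with coefficient
`4p`; hence `p = 0`. Comparing the remaining coefficients of `Q(u, e v) = Q'(u, v)` gives
`x_t = x_{t'}`, `a = a'` and `e y_t = y_{t'}`, and then `b = b'` because both points lie on
curves with the same `a` and the same `x`-coordinate and `y_t² = y_{t'}²`.
-/

open Matrix

def descentQuartic {R : Type*} [CommRing R] (a x y u v : R) : R :=
  u ^ 4 - 6 * x * u ^ 2 * v ^ 2 - 8 * y * u * v ^ 3 - (3 * x ^ 2 + 4 * a) * v ^ 4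

section DescentQuartic

variable {R : Type*} [CommRing R] [IsDomain R] [CharZero R] {a x y a' x' y' : R}

theorem shear_eq_zero_of_descentQuartic_eq {p e : R}
    (h : ∀ u v, descentQuartic a x y (u + p * v) (e * v) = descentQuartic a' x' y' u v) :
    p = 0 := by
  have h1 := h 1 1
  have h2 := h (-1) 1
  have h3 := h 2 1
  have h4 := h (-2) 1
  simp only [descentQuartic] at h1 h2 h3 h4
  -- `f(2) - f(-2) - 2 f(1) + 2 f(-1)` isolates `12` times the `u³` coefficient of a quartic `f(u)`.
  have h48 : (48 : R) * p = 0 := by linear_combination h3 - h4 - 2 * h1 + 2 * h2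
  exact (mul_eq_zero.mp h48).resolve_left (by norm_num)

theorem descentQuartic_scale_inj {e : R} (he : e ^ 2 = 1)
    (h : ∀ u v, descentQuartic a x y u (e * v) = descentQuartic a' x' y' u v) :
    a = a' ∧ x = x' ∧ e * y = y' := by
  have h0 := h 0 1
  have h1 := h 1 1
  have h2 := h (-1) 1
  simp only [descentQuartic] at h0 h1 h2
  have hx : x = x' := mul_left_cancel₀ (show (12 : R) ≠ 0 by norm_num) <| by
    linear_combination (-1 : R) * h1 - h2 + 2 * h0 - 12 * x * he
  have hy : e * y = y' := mul_left_cancel₀ (show (16 : R) ≠ 0 by norm_num) <| by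
    linear_combination h2 - h1 - 16 * e * y * he
  have ha : a = a' := mul_left_cancel₀ (show (4 : R) ≠ 0 by norm_num) <| by
    linear_combination (-1 : R) * h0 - 3 * (x + x') * hx - (3 * x ^ 2 + 4 * a) * (e ^ 2 + 1) * he
  exact ⟨ha, hx, hy⟩

end DescentQuartic

theorem mulVec_eq_vecCons_one_zero_iff {R : Type*} [Semiring R] (M : Matrix (Fin 2) (Fin 2) R) :
    M.mulVec ![1, 0] = ![1, 0] ↔ M 0 0 = 1 ∧ M 1 0 = 0 := by
  simp

theorem isUnit_apply_one_one_of_GL {R : Type*} [CommRing R] (g : GL (Fin 2) R)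
    (h00 : (g : Matrix (Fin 2) (Fin 2) R) 0 0 = 1) (h10 : (g : Matrix (Fin 2) (Fin 2) R) 1 0 = 0) :
    IsUnit ((g : Matrix (Fin 2) (Fin 2) R) 1 1) := by
  simpa [det_fin_two, h00, h10] using (isUnit_iff_isUnit_det _).mp g.isUnit

/-- injectivity of the descent map. If `g ∈ GL₂(ℤ)` fixes the vector `(1,0)`
and transforms the quartic associated to `(a, b, x_t, y_t)` into the one associated to
`(a', b', x_{t'}, y_{t'})`, then `a = a'`, `b = b'`, `x_t = x_{t'}` and `y_t = ±y_{t'}`. -/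
theorem stmt10 (a a' b b' xt yt xt' yt' : ℤ)
    (ht : yt ^ 2 = xt ^ 3 + a * xt + b)
    (ht' : yt' ^ 2 = xt' ^ 3 + a' * xt' + b')
    (g : GL (Fin 2) ℤ)
    (hfix : (g : Matrix (Fin 2) (Fin 2) ℤ).mulVec ![1, 0] = ![1, 0])
    (htrans : ∀ u v : ℤ,
      letI u' := (g : Matrix (Fin 2) (Fin 2) ℤ) 0 0 * u + (g : Matrix (Fin 2) (Fin 2) ℤ) 0 1 * v
      letI v' := (g : Matrix (Fin 2) (Fin 2) ℤ) 1 0 * u + (g : Matrix (Fin 2) (Fin 2) ℤ) 1 1 * v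
      u' ^ 4 - 6 * xt * u' ^ 2 * v' ^ 2 - 8 * yt * u' * v' ^ 3 - (3 * xt ^ 2 + 4 * a) * v' ^ 4
        = u ^ 4 - 6 * xt' * u ^ 2 * v ^ 2 - 8 * yt' * u * v ^ 3
          - (3 * xt' ^ 2 + 4 * a') * v ^ 4) :
    a = a' ∧ b = b' ∧ xt = xt' ∧ (yt = yt' ∨ yt = -yt') := by
  obtain ⟨h00, h10⟩ := (mulVec_eq_vecCons_one_zero_iff _).mp hfix
  have hunit := isUnit_apply_one_one_of_GL g h00 h10
  set p := (g : Matrix (Fin 2) (Fin 2) ℤ) 0 1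
  set e := (g : Matrix (Fin 2) (Fin 2) ℤ) 1 1
  have hshear : ∀ u v, descentQuartic a xt yt (u + p * v) (e * v)
      = descentQuartic a' xt' yt' u v := by
    intro u v
    simpa [descentQuartic, h00, h10] using htrans u v
  have hp : p = 0 := shear_eq_zero_of_descentQuartic_eq hshear
  obtain ⟨rfl, rfl, rfl⟩ :=
    descentQuartic_scale_inj (Int.isUnit_sq hunit) (by simpa [hp] using hshear)
  rcases Int.isUnit_eq_one_or hunit with he | he <;> rw [he] at ht' ⊢ <;>
    exact ⟨rfl, by linear_combination ht' - ht, rfl, by simp⟩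
end
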